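/- arXiv:1904.12565 — 2 statements merged into one kernel-verified Lean document; each statement's English description precedes it below -/
import Mathlib

section
/- Let L : ℝ⁴ → ℝ⁴ be the linear map L(x₁,x₂,x₃,x₄) = (x₁+x₂, x₁−x₂, x₁−x₃, x₁−x₄). (a) Let W₀ be the convex cone of quadratic forms generated over the nonnegative reals by x_i² (1 ≤ i ≤ 4), (x_i−x_j)² for (i,j) ∈ {(1,3),(1,4),(2,3),(2,4)}, and (x₁+x₂−x₃−x₄)². Then {q∘L : q ∈ W₀} is the convex cone generated by the nine forms (x₁+x₂)², (x₂+x₃)², (x₂+x₄)², (x₃+x₄)², (x₁−x₂)², (x₁−x₃)², (x₁−x₄)², (x₂−x₃)², (x₂−x₄)²; i.e. exactly the three forms (x₁+x₃)², (x₁+x₄)², (x₃−x₄)² are missing from the 12 forms (x_i ± x_j)² (1 ≤ i < j ≤ 4). (b) Let W₁ be the convex cone generated by x_i² (1 ≤ i ≤ 4) and (x_i−x_j)² for 1 ≤ i < j ≤ 4 with (i,j) ≠ (1,2). Then {q∘L : q ∈ W₁} is the convex cone generated by the nine forms (x₁+x₂)², (x₂+x₃)², (x₂+x₄)², (x₁−x₂)²,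 (x₁−x₃)², (x₁−x₄)², (x₂−x₃)², (x₂−x₄)², (x₃−x₄)²; i.e. exactly the three forms (x₁+x₃)², (x₁+x₄)², (x₃+x₄)² are missing. -/
open Set

noncomputable section

/-- The squared linear form `x ↦ (c ⬝ x)²` on `ℝ⁴`, viewed as a quadratic form. -/
def sqf (c : Fin 4 → ℝ) : (Fin 4 → ℝ) → ℝ := fun x => (∑ i, c i * x i) ^ 2

/-- The standard basis vectors of `ℝ⁴` (so `x i = sqf (ee i)`-linear form etc.). -/
def ee (i : Fin 4) : Fin 4 → ℝ := Pi.single i 1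

/-- The convex cone generated over the nonnegative reals by a finite family of
quadratic forms. -/
def coneOf {n : ℕ} (v : Fin n → ((Fin 4 → ℝ) → ℝ)) : Set ((Fin 4 → ℝ) → ℝ) :=
  {q | ∃ c : Fin n → ℝ, (∀ i, 0 ≤ c i) ∧ q = ∑ i, c i • v i}

/-- The Voronoi substitution `L(x₁,x₂,x₃,x₄) = (x₁+x₂, x₁−x₂, x₁−x₃, x₁−x₄)`. -/
def Lmap : (Fin 4 → ℝ) → (Fin 4 → ℝ) :=
  fun x => ![x 0 + x 1, x 0 - x 1, x 0 - x 2, x 0 - x 3]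

/-- The 9 generators of the face `W₀ = V₃ ∩ V₄` of the perfect cone `K`:
`xᵢ²`, `(xᵢ-xⱼ)²` for `(i,j) ∈ {(1,3),(1,4),(2,3),(2,4)}`, and `(x₁+x₂-x₃-x₄)²`. -/
def genW0 : Fin 9 → ((Fin 4 → ℝ) → ℝ) :=
  ![sqf (ee 0), sqf (ee 1), sqf (ee 2), sqf (ee 3),
    sqf (ee 0 - ee 2), sqf (ee 0 - ee 3), sqf (ee 1 - ee 2), sqf (ee 1 - ee 3),
    sqf (ee 0 + ee 1 - ee 2 - ee 3)]

/-- The 9 generators of the face `W₁ = V₁ ∩ V₂` of the perfect cone `K`: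
`xᵢ²` and `(xᵢ-xⱼ)²` for `i < j`, `(i,j) ≠ (1,2)`. -/
def genW1 : Fin 9 → ((Fin 4 → ℝ) → ℝ) :=
  ![sqf (ee 0), sqf (ee 1), sqf (ee 2), sqf (ee 3),
    sqf (ee 0 - ee 2), sqf (ee 0 - ee 3), sqf (ee 1 - ee 2), sqf (ee 1 - ee 3),
    sqf (ee 2 - ee 3)]

/-! ### Auxiliary lemmas -/

/-- Precomposition with `Lmap` carries the cone on generators `v` to the cone on the
composed generators. -/
lemma coneOf_comp {n : ℕ} (v : Fin n → ((Fin 4 → ℝ) → ℝ)) :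
    (fun q => q ∘ Lmap) '' coneOf v = coneOf (fun i => v i ∘ Lmap) := by
  ext q
  constructor
  · rintro ⟨p, ⟨c, hc, rfl⟩, rfl⟩
    exact ⟨c, hc, funext fun x => by simp [Finset.sum_apply]⟩
  · rintro ⟨c, hc, rfl⟩
    exact ⟨∑ i, c i • v i, ⟨c, hc, rfl⟩, funext fun x => by simp [Finset.sum_apply]⟩

lemma coneOf_perm_subset {n : ℕ} (v : Fin n → ((Fin 4 → ℝ) → ℝ)) (σ : Equiv.Perm (Fin n)) :
    coneOf (v ∘ σ) ⊆ coneOf v := by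
  rintro q ⟨c, hc, rfl⟩
  refine ⟨c ∘ σ.symm, fun i => hc _, ?_⟩
  rw [← Equiv.sum_comp σ (fun i => (c ∘ σ.symm) i • v i)]
  simp

/-- The cone does not depend on the ordering of the generators. -/
lemma coneOf_perm {n : ℕ} (v : Fin n → ((Fin 4 → ℝ) → ℝ)) (σ : Equiv.Perm (Fin n)) :
    coneOf (v ∘ σ) = coneOf v := by
  refine subset_antisymm (coneOf_perm_subset v σ) ?_
  have := coneOf_perm_subset (v ∘ σ) σ.symm
  simpa [Function.comp_assoc] using this

/-- The permutation matching `genW0 ∘ Lmap` with the target generators of part (a). -/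
def sig0 : Equiv.Perm (Fin 9) where
  toFun := ![0, 4, 5, 6, 1, 2, 7, 8, 3]
  invFun := ![0, 4, 5, 8, 1, 2, 3, 6, 7]
  left_inv := by decide
  right_inv := by decide

/-- The permutation matching `genW1 ∘ Lmap` with the target generators of part (b). -/
def sig1 : Equiv.Perm (Fin 9) where
  toFun := ![0, 3, 4, 5, 1, 2, 6, 7, 8]
  invFun := ![0, 4, 5, 1, 2, 3, 6, 7, 8]
  left_inv := by decide
  right_inv := by decide

lemma comp0 : sqf (ee 0) ∘ Lmap = sqf (ee 0 + ee 1) := by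
  funext x; simp [sqf, ee, Lmap, Fin.sum_univ_four, Pi.single_apply]; try ring
lemma comp1 : sqf (ee 1) ∘ Lmap = sqf (ee 0 - ee 1) := by
  funext x; simp [sqf, ee, Lmap, Fin.sum_univ_four, Pi.single_apply]; try ring
lemma comp2 : sqf (ee 2) ∘ Lmap = sqf (ee 0 - ee 2) := by
  funext x; simp [sqf, ee, Lmap, Fin.sum_univ_four, Pi.single_apply]; try ring
lemma comp3 : sqf (ee 3) ∘ Lmap = sqf (ee 0 - ee 3) := by
  funext x; simp [sqf, ee, Lmap, Fin.sum_univ_four, Pi.single_apply]; try ring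
lemma comp4 : sqf (ee 0 - ee 2) ∘ Lmap = sqf (ee 1 + ee 2) := by
  funext x; simp [sqf, ee, Lmap, Fin.sum_univ_four, Pi.single_apply]; try ring
lemma comp5 : sqf (ee 0 - ee 3) ∘ Lmap = sqf (ee 1 + ee 3) := by
  funext x; simp [sqf, ee, Lmap, Fin.sum_univ_four, Pi.single_apply]; try ring
lemma comp6 : sqf (ee 1 - ee 2) ∘ Lmap = sqf (ee 1 - ee 2) := by
  funext x; simp [sqf, ee, Lmap, Fin.sum_univ_four, Pi.single_apply]; try ring
lemma comp7 : sqf (ee 1 - ee 3) ∘ Lmap = sqf (ee 1 - ee 3) := by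
  funext x; simp [sqf, ee, Lmap, Fin.sum_univ_four, Pi.single_apply]; try ring
lemma comp8 : sqf (ee 0 + ee 1 - ee 2 - ee 3) ∘ Lmap = sqf (ee 2 + ee 3) := by
  funext x; simp [sqf, ee, Lmap, Fin.sum_univ_four, Pi.single_apply]; try ring
lemma comp9 : sqf (ee 2 - ee 3) ∘ Lmap = sqf (ee 2 - ee 3) := by
  funext x; simp [sqf, ee, Lmap, Fin.sum_univ_four, Pi.single_apply]; try ring

/-- Under the substitution `q ↦ q ∘ L`:
(a) `W₀` is carried onto the cone generated by the nine forms
`(x₁+x₂)², (x₂+x₃)², (x₂+x₄)², (x₃+x₄)², (x₁−x₂)², (x₁−x₃)², (x₁−x₄)², (x₂−x₃)²,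
(x₂−x₄)²` (so exactly `(x₁+x₃)², (x₁+x₄)², (x₃−x₄)²` are missing);
(b) `W₁` is carried onto the cone generated by the nine forms
`(x₁+x₂)², (x₂+x₃)², (x₂+x₄)², (x₁−x₂)², (x₁−x₃)², (x₁−x₄)², (x₂−x₃)², (x₂−x₄)²,
(x₃−x₄)²` (so exactly `(x₁+x₃)², (x₁+x₄)², (x₃+x₄)²` are missing). -/
theorem voronoi_transformation_of_faces :
    (fun q => q ∘ Lmap) '' coneOf genW0 =
      coneOf
        ![sqf (ee 0 + ee 1), sqf (ee 1 + ee 2), sqf (ee 1 + ee 3), sqf (ee 2 + ee 3),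
          sqf (ee 0 - ee 1), sqf (ee 0 - ee 2), sqf (ee 0 - ee 3),
          sqf (ee 1 - ee 2), sqf (ee 1 - ee 3)] ∧
    (fun q => q ∘ Lmap) '' coneOf genW1 =
      coneOf
        ![sqf (ee 0 + ee 1), sqf (ee 1 + ee 2), sqf (ee 1 + ee 3),
          sqf (ee 0 - ee 1), sqf (ee 0 - ee 2), sqf (ee 0 - ee 3),
          sqf (ee 1 - ee 2), sqf (ee 1 - ee 3), sqf (ee 2 - ee 3)] := by
  constructor
  · rw [coneOf_comp genW0]
    rw [show (fun i => genW0 i ∘ Lmap) =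
        (![sqf (ee 0 + ee 1), sqf (ee 1 + ee 2), sqf (ee 1 + ee 3), sqf (ee 2 + ee 3),
          sqf (ee 0 - ee 1), sqf (ee 0 - ee 2), sqf (ee 0 - ee 3),
          sqf (ee 1 - ee 2), sqf (ee 1 - ee 3)]) ∘ ⇑sig0 from ?_]
    · exact coneOf_perm _ sig0
    · funext i
      fin_cases i
      · exact comp0
      · exact comp1
      · exact comp2
      · exact comp3
      · exact comp4
      · exact comp5
      · exact comp6
      · exact comp7
      · exact comp8
  · rw [coneOf_comp genW1]
    rw [show (fun i => genW1 i ∘ Lmap) =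
        (![sqf (ee 0 + ee 1), sqf (ee 1 + ee 2), sqf (ee 1 + ee 3),
          sqf (ee 0 - ee 1), sqf (ee 0 - ee 2), sqf (ee 0 - ee 3),
          sqf (ee 1 - ee 2), sqf (ee 1 - ee 3), sqf (ee 2 - ee 3)]) ∘ ⇑sig1 from ?_]
    · exact coneOf_perm _ sig1
    · funext i
      fin_cases i
      · exact comp0
      · exact comp1
      · exact comp2
      · exact comp3
      · exact comp4
      · exact comp5
      · exact comp6
      · exact comp7
      · exact comp9
end
end

section
/- Let W₀ be the convex cone of quadratic forms on ℝ⁴ generated over the nonnegative reals by x_i² (1 ≤ i ≤ 4), (x_i−x_j)² for (i,j) ∈ {(1,3),(1,4),(2,3),(2,4)}, and (x₁+x₂−x₃−x₄)², and let L(x₁,x₂,x₃,x₄) = (x₁+x₂, x₁−x₂, x₁−x₃, x₁−x₄). Let P be the linear map P(x₁,x₂,x₃,x₄) = (−x₂, −x₁, x₃−x₁−x₂, x₄−x₁−x₂); its matrix lies in GL(4,ℤ). Then {q∘P∘L : q ∈ W₀} is the convex cone generated over the nonnegative reals by the nine forms (x₁+x₂)², (x₁−x₂)², (x₁+x₃)²,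 (x₁+x₄)², (x₂+x₃)², (x₂−x₃)², (x₂+x₄)², (x₂−x₄)², (x₃+x₄)²; i.e. exactly the three 'red' forms (x₁−x₃)², (x₁−x₄)², (x₃−x₄)² are missing from the 12 forms (x_i ± x_j)² (1 ≤ i < j ≤ 4). Hence W₀ is GL(4,ℤ)-equivalent to a red triangle face of the perfect cone K. -/
open Set

noncomputable section

/-- The linear map `P(x₁,x₂,x₃,x₄) = (−x₂, −x₁, x₃−x₁−x₂, x₄−x₁−x₂)`. -/
def Pmap : (Fin 4 → ℝ) → (Fin 4 → ℝ) :=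
  fun x => ![-x 1, -x 0, x 2 - x 0 - x 1, x 3 - x 0 - x 1]

/-- The integer matrix of `P`. -/
def Pmat : Matrix (Fin 4) (Fin 4) ℤ :=
  !![0, -1, 0, 0; -1, 0, 0, 0; -1, -1, 1, 0; -1, -1, 0, 1]


/-- The target generators, abbreviated. -/
def TG : Fin 9 → ((Fin 4 → ℝ) → ℝ) :=
  ![sqf (ee 0 + ee 1), sqf (ee 0 - ee 1), sqf (ee 0 + ee 2), sqf (ee 0 + ee 3),
    sqf (ee 1 + ee 2), sqf (ee 1 - ee 2), sqf (ee 1 + ee 3), sqf (ee 1 - ee 3),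
    sqf (ee 2 + ee 3)]

/-- The matching permutation of the generators. -/
def sig : Equiv.Perm (Fin 9) := (Equiv.swap 0 1).trans (Equiv.swap 5 6)

lemma sqf_comp (c d : Fin 4 → ℝ)
    (h : ∀ x : Fin 4 → ℝ, (∑ i, c i * (Pmap (Lmap x)) i) ^ 2 = (∑ i, d i * x i) ^ 2) :
    sqf c ∘ Pmap ∘ Lmap = sqf d := by
  funext x
  simp only [Function.comp_apply, sqf]
  exact h x

lemma key (i : Fin 9) : genW0 i ∘ Pmap ∘ Lmap = TG (sig i) := by
  fin_cases i <;>
  · refine sqf_comp _ _ (fun x => ?_)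
    simp [ee, Pmap, Lmap, Fin.sum_univ_four, Pi.single_apply]
    ring

lemma comp_sum (c : Fin 9 → ℝ) :
    (∑ i, c i • genW0 i) ∘ Pmap ∘ Lmap = ∑ i, c i • TG (sig i) := by
  funext x
  simp [Finset.sum_apply, ← key]

/-- `P` is given by the integer matrix `Pmat`, which lies in `GL(4,ℤ)`, and the
substitution `q ↦ q ∘ P ∘ L` carries `W₀` onto the cone generated by the nine forms
`(x₁+x₂)², (x₁−x₂)², (x₁+x₃)², (x₁+x₄)², (x₂+x₃)², (x₂−x₃)², (x₂+x₄)², (x₂−x₄)²,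
(x₃+x₄)²`; exactly the three red forms `(x₁−x₃)², (x₁−x₄)², (x₃−x₄)²` are missing.
Hence `W₀` is `GL(4,ℤ)`-equivalent to a red triangle face of the perfect cone `K`. -/
theorem W0_equivalent_red_triangle :
    (∀ x : Fin 4 → ℝ, Pmap x = fun i => ∑ j, (Pmat i j : ℝ) * x j) ∧
    IsUnit Pmat.det ∧
    (fun q => q ∘ Pmap ∘ Lmap) '' coneOf genW0 =
      coneOf
        ![sqf (ee 0 + ee 1), sqf (ee 0 - ee 1), sqf (ee 0 + ee 2), sqf (ee 0 + ee 3),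
          sqf (ee 1 + ee 2), sqf (ee 1 - ee 2), sqf (ee 1 + ee 3), sqf (ee 1 - ee 3),
          sqf (ee 2 + ee 3)] := by
  refine ⟨?_, ?_, ?_⟩
  · intro x
    funext i
    fin_cases i <;> simp [Pmap, Pmat, Fin.sum_univ_four] <;> ring
  · have : Pmat.det = -1 := by decide
    rw [this]; exact isUnit_one.neg
  · show _ = coneOf TG
    ext q
    constructor
    · rintro ⟨p, ⟨c, hc, rfl⟩, rfl⟩
      refine ⟨fun j => c (sig j), fun i => hc _, ?_⟩
      show (∑ i, c i • genW0 i) ∘ Pmap ∘ Lmap = _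
      rw [comp_sum]
      rw [← Equiv.sum_comp sig (fun j => c (sig j) • TG j)]
      have h2 : ∀ i : Fin 9, sig (sig i) = i := by decide
      simp [h2]
    · rintro ⟨c, hc, rfl⟩
      refine ⟨∑ i, c (sig i) • genW0 i, ⟨fun i => c (sig i), fun i => hc _, rfl⟩, ?_⟩
      show (∑ i, c (sig i) • genW0 i) ∘ Pmap ∘ Lmap = _
      rw [comp_sum (fun i => c (sig i))]
      exact Equiv.sum_comp sig (fun j => c j • TG j)
end
end
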